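/- Let W ∈ ℝ^{n×m} be a matrix of rank at most k. Then ‖W‖_* = min { ½(‖U‖_F² + ‖V‖_F²) : U ∈ ℝ^{n×k}, V ∈ ℝ^{m×k}, W = UVᵀ }, and the minimum is attained by some factorization W = UVᵀ. -/

import Mathlib

open Matrix

/-- The trace norm (nuclear norm) of a real matrix: the sum of its singular
values, i.e. the sum of the square roots of the eigenvalues of `Mᵀ * M`. -/
noncomputable def traceNorm {n d : ℕ} (M : Matrix (Fin n) (Fin d) ℝ) : ℝ :=
  ∑ i, Real.sqrt ((Matrix.isHermitian_conjTranspose_mul_self M).eigenvalues i)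

/-- The squared Frobenius norm of a real matrix. -/
noncomputable def frobSq {n d : ℕ} (M : Matrix (Fin n) (Fin d) ℝ) : ℝ :=
  ∑ i, ∑ j, (M i j)^2

/-!
Let `A Σ Bᵀ` be a compact singular value decomposition of `W`: the columns of `B` are the
eigenvectors of `Wᵀ W` with nonzero eigenvalue `σᵢ²`, and `A = W B Σ⁻¹`. There are `rank W ≤ k`
such columns, so `U = A Σ^{1/2}` and `V = B Σ^{1/2}`, padded with zero columns, factor `W` with
`½ (‖U‖_F² + ‖V‖_F²) = ∑ σᵢ = ‖W‖_*`. Conversely, if `W = U Vᵀ`, then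
`∑ σᵢ = tr (Aᵀ U Vᵀ B) ≤ ½ (‖Aᵀ U‖_F² + ‖Bᵀ V‖_F²)` by AM–GM, and Bessel's inequality
`‖Aᵀ U‖_F ≤ ‖U‖_F` (as `A` has orthonormal columns) bounds this by `½ (‖U‖_F² + ‖V‖_F²)`.
-/

namespace Matrix

section Trace

variable {l m n r : Type*} [Fintype l] [Fintype m] [Fintype n] [Fintype r]

theorem trace_transpose_mul_self_nonneg (M : Matrix m n ℝ) : 0 ≤ trace (Mᵀ * M) := by
  simpa only [conjTranspose_eq_transpose_of_trivial] using
    (posSemidef_conjTranspose_mul_self M).trace_nonneg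

theorem trace_transpose_mul_le (X Y : Matrix m n ℝ) :
    trace (Xᵀ * Y) ≤ (trace (Xᵀ * X) + trace (Yᵀ * Y)) / 2 := by
  have hYX : trace (Yᵀ * X) = trace (Xᵀ * Y) := by
    rw [← trace_transpose, transpose_mul, transpose_transpose]
  have h := trace_transpose_mul_self_nonneg (X - Y)
  rw [transpose_sub, Matrix.sub_mul, Matrix.mul_sub, Matrix.mul_sub, trace_sub, trace_sub,
    trace_sub, hYX] at h
  linarith

theorem trace_transpose_mul_self_transpose_mul_le [DecidableEq n] [DecidableEq r]
    {A : Matrix n r ℝ} (hA : Aᵀ * A = 1) (M : Matrix n m ℝ) :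
    trace ((Aᵀ * M)ᵀ * (Aᵀ * M)) ≤ trace (Mᵀ * M) := by
  set P := A * Aᵀ
  -- `1 - P` is the orthogonal projection onto the complement of the column space of `A`.
  have hP : (1 - P)ᵀ * (1 - P) = 1 - P := by
    have hPP : P * P = P := by
      simp only [P]
      rw [Matrix.mul_assoc, ← Matrix.mul_assoc Aᵀ, hA, Matrix.one_mul]
    have hPt : Pᵀ = P := by simp only [P, transpose_mul, transpose_transpose]
    rw [transpose_sub, transpose_one, hPt, sub_mul, mul_sub, mul_sub, hPP]
    noncomm_ring
  have hsplit : Mᵀ * M = (Aᵀ * M)ᵀ * (Aᵀ * M) + ((1 - P) * M)ᵀ * ((1 - P) * M) := by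
    rw [transpose_mul (1 - P), Matrix.mul_assoc, ← Matrix.mul_assoc (1 - P)ᵀ, hP]
    simp only [P, transpose_mul, transpose_transpose, Matrix.sub_mul, Matrix.mul_sub,
      Matrix.one_mul, Matrix.mul_assoc]
    abel
  rw [hsplit, trace_add]
  linarith [trace_transpose_mul_self_nonneg ((1 - P) * M)]

theorem trace_transpose_mul_self_mul_of_mul_transpose_eq_one [DecidableEq r]
    {M : Matrix n r ℝ} {E : Matrix r l ℝ} (hE : E * Eᵀ = 1) :
    trace ((M * E)ᵀ * (M * E)) = trace (Mᵀ * M) := by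
  rw [transpose_mul, Matrix.mul_assoc, trace_mul_comm, Matrix.mul_assoc, Matrix.mul_assoc, hE,
    Matrix.mul_one]

theorem trace_transpose_mul_self_mul_diagonal [DecidableEq r] {A : Matrix n r ℝ}
    (hA : Aᵀ * A = 1) (d : r → ℝ) :
    trace ((A * diagonal d)ᵀ * (A * diagonal d)) = ∑ i, d i ^ 2 := by
  rw [transpose_mul, diagonal_transpose, Matrix.mul_assoc, ← Matrix.mul_assoc Aᵀ, hA,
    Matrix.one_mul, diagonal_mul_diagonal, trace_diagonal]
  simp only [sq]

end Trace

theorem submatrix_one_mul_transpose_of_injective {l r : Type*} [Fintype l] [DecidableEq l]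
    [DecidableEq r] {e : r → l} (he : Function.Injective e) :
    (1 : Matrix l l ℝ).submatrix e id * ((1 : Matrix l l ℝ).submatrix e id)ᵀ = 1 := by
  rw [transpose_submatrix, transpose_one, ← submatrix_mul _ _ _ _ _ Function.bijective_id,
    Matrix.mul_one, submatrix_one _ he]

theorem mul_diagonal_mul_transpose_eq_submatrix {n m R : Type*} [Fintype m] [DecidableEq m]
    [CommSemiring R] [DecidableEq R] (M : Matrix n m R) (d : m → R) :
    M * diagonal d * Mᵀ =
      M.submatrix id (Subtype.val : {i // d i ≠ 0} → m) *
        diagonal (fun i : {i // d i ≠ 0} => d i) *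
        (M.submatrix id (Subtype.val : {i // d i ≠ 0} → m))ᵀ := by
  ext a b
  rw [mul_apply, mul_apply]
  simp only [mul_diagonal, transpose_apply, submatrix_apply, id]
  have hzero : ∑ j : {j // ¬d j ≠ 0}, M a j * d j * M b j = 0 :=
    Fintype.sum_eq_zero _ fun j => by rw [not_not.mp j.2, mul_zero, zero_mul]
  rw [← Fintype.sum_subtype_add_sum_subtype (fun j => d j ≠ 0), hzero, add_zero]

theorem IsHermitian.eq_eigenvectorUnitary_mul_diagonal_mul_transpose {m : Type*} [Fintype m]
    [DecidableEq m] {H : Matrix m m ℝ} (hH : H.IsHermitian) :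
    H = (hH.eigenvectorUnitary : Matrix m m ℝ) * diagonal hH.eigenvalues *
      (hH.eigenvectorUnitary : Matrix m m ℝ)ᵀ := by
  conv_lhs => rw [hH.spectral_theorem]
  rw [Unitary.conjStarAlgAut_apply, star_eq_conjTranspose, conjTranspose_eq_transpose_of_trivial,
    RCLike.ofReal_real_eq_id, Function.id_comp]

section Factorization

variable {l m n r : Type*} [Fintype l] [Fintype m] [Fintype n] [Fintype r] [DecidableEq r]
  {W : Matrix n m ℝ} {A : Matrix n r ℝ} {B : Matrix m r ℝ} {σ : r → ℝ}
  (hA : Aᵀ * A = 1) (hB : Bᵀ * B = 1) (hW : W = A * diagonal σ * Bᵀ)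
include hA hB hW

theorem sum_le_of_eq_mul_transpose [DecidableEq m] [DecidableEq n] {U : Matrix n l ℝ}
    {V : Matrix m l ℝ} (hUV : W = U * Vᵀ) :
    ∑ i, σ i ≤ (trace (Uᵀ * U) + trace (Vᵀ * V)) / 2 := by
  have hσ : ∑ i, σ i = trace ((Bᵀ * V)ᵀ * (Aᵀ * U)) := by
    calc ∑ i, σ i = trace (Aᵀ * W * B) := by
          rw [hW, ← trace_diagonal]
          simp only [Matrix.mul_assoc, hB, Matrix.mul_one]
          rw [← Matrix.mul_assoc, hA, Matrix.one_mul]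
      _ = trace ((Bᵀ * V)ᵀ * (Aᵀ * U)) := by
          rw [hUV, transpose_mul, transpose_transpose, trace_mul_comm _ B, Matrix.mul_assoc Vᵀ,
            trace_mul_comm Vᵀ]
          simp only [Matrix.mul_assoc]
  calc ∑ i, σ i
      ≤ (trace ((Bᵀ * V)ᵀ * (Bᵀ * V)) + trace ((Aᵀ * U)ᵀ * (Aᵀ * U))) / 2 :=
        hσ ▸ trace_transpose_mul_le _ _
    _ ≤ (trace (Uᵀ * U) + trace (Vᵀ * V)) / 2 := by
        rw [add_comm (trace (Uᵀ * U))]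
        gcongr
        · exact trace_transpose_mul_self_transpose_mul_le hB V
        · exact trace_transpose_mul_self_transpose_mul_le hA U

theorem exists_eq_mul_transpose_of_embedding [DecidableEq l] (hσ : ∀ i, 0 ≤ σ i) (e : r ↪ l) :
    ∃ (U : Matrix n l ℝ) (V : Matrix m l ℝ), W = U * Vᵀ ∧
      trace (Uᵀ * U) = ∑ i, σ i ∧ trace (Vᵀ * V) = ∑ i, σ i := by
  set E := (1 : Matrix l l ℝ).submatrix e id
  have hE : E * Eᵀ = 1 := submatrix_one_mul_transpose_of_injective e.injective
  set D := diagonal fun i => √(σ i)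
  have hsq : ∑ i, √(σ i) ^ 2 = ∑ i, σ i := Finset.sum_congr rfl fun i _ => Real.sq_sqrt (hσ i)
  refine ⟨A * D * E, B * D * E, ?_, ?_, ?_⟩
  · have hDD : D * D = diagonal σ := by
      rw [diagonal_mul_diagonal]
      congr
      ext i
      exact Real.mul_self_sqrt (hσ i)
    have hDt : Dᵀ = D := diagonal_transpose _
    rw [hW, ← hDD]
    simp only [transpose_mul, hDt, Matrix.mul_assoc]
    rw [← Matrix.mul_assoc E, hE, Matrix.one_mul]
  · rw [trace_transpose_mul_self_mul_of_mul_transpose_eq_one hE,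
      trace_transpose_mul_self_mul_diagonal hA, hsq]
  · rw [trace_transpose_mul_self_mul_of_mul_transpose_eq_one hE,
      trace_transpose_mul_self_mul_diagonal hB, hsq]

end Factorization

section SingularValueDecomposition

variable {m n : Type*} [Fintype m] [DecidableEq m] [Fintype n] (W : Matrix n m ℝ)

abbrev SingularIndex : Type _ :=
  {i : m // (isHermitian_conjTranspose_mul_self W).eigenvalues i ≠ 0}

noncomputable def singularValue (i : m) : ℝ :=
  √((isHermitian_conjTranspose_mul_self W).eigenvalues i)

noncomputable def rightSingularVectors : Matrix m (SingularIndex W) ℝ :=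
  ((isHermitian_conjTranspose_mul_self W).eigenvectorUnitary : Matrix m m ℝ).submatrix id
    Subtype.val

noncomputable def leftSingularVectors : Matrix n (SingularIndex W) ℝ :=
  W * rightSingularVectors W * diagonal fun i : SingularIndex W => (singularValue W i)⁻¹

theorem card_singularIndex : Fintype.card (SingularIndex W) = W.rank := by
  rw [← (isHermitian_conjTranspose_mul_self W).rank_eq_card_non_zero_eigs,
    conjTranspose_eq_transpose_of_trivial, rank_transpose_mul_self]

theorem singularValue_sq (i : m) :
    singularValue W i ^ 2 = (isHermitian_conjTranspose_mul_self W).eigenvalues i :=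
  Real.sq_sqrt (eigenvalues_conjTranspose_mul_self_nonneg W i)

theorem singularValue_ne_zero (i : SingularIndex W) : singularValue W i ≠ 0 := fun h =>
  i.2 (by rw [← singularValue_sq, h, sq, zero_mul])

theorem rightSingularVectors_transpose_mul_self :
    (rightSingularVectors W)ᵀ * rightSingularVectors W = 1 := by
  have hQ := Unitary.coe_star_mul_self (isHermitian_conjTranspose_mul_self W).eigenvectorUnitary
  rw [star_eq_conjTranspose, conjTranspose_eq_transpose_of_trivial] at hQ
  rw [rightSingularVectors, transpose_submatrix, ← submatrix_mul _ _ _ _ _ Function.bijective_id,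
    hQ, submatrix_one _ Subtype.val_injective]

theorem transpose_mul_self_eq :
    Wᵀ * W = rightSingularVectors W *
      diagonal (fun i : SingularIndex W => singularValue W i ^ 2) * (rightSingularVectors W)ᵀ := by
  have h := (isHermitian_conjTranspose_mul_self W).eq_eigenvectorUnitary_mul_diagonal_mul_transpose
  rw [mul_diagonal_mul_transpose_eq_submatrix] at h
  calc Wᵀ * W = Wᴴ * W := by rw [conjTranspose_eq_transpose_of_trivial]
    _ = _ := h
    _ = _ := by simp only [singularValue_sq]; rfl

theorem transpose_mul_transpose_mul_self_mul_rightSingularVectors :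
    (rightSingularVectors W)ᵀ * (Wᵀ * W) * rightSingularVectors W =
      diagonal fun i : SingularIndex W => singularValue W i ^ 2 := by
  rw [transpose_mul_self_eq, ← Matrix.mul_assoc, ← Matrix.mul_assoc,
    rightSingularVectors_transpose_mul_self, Matrix.one_mul, Matrix.mul_assoc,
    rightSingularVectors_transpose_mul_self, Matrix.mul_one]

theorem mul_rightSingularVectors_mul_transpose :
    W * rightSingularVectors W * (rightSingularVectors W)ᵀ = W := by
  set P := 1 - rightSingularVectors W * (rightSingularVectors W)ᵀ
  have hBP : (rightSingularVectors W)ᵀ * P = 0 := by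
    rw [Matrix.mul_sub, Matrix.mul_one, ← Matrix.mul_assoc,
      rightSingularVectors_transpose_mul_self, Matrix.one_mul, sub_self]
  have hPt : Pᵀ = P := by
    simp only [P, transpose_sub, transpose_one, transpose_mul, transpose_transpose]
  have hWP : (W * P)ᵀ * (W * P) = 0 := by
    rw [transpose_mul, Matrix.mul_assoc, ← Matrix.mul_assoc Wᵀ, transpose_mul_self_eq, hPt]
    simp only [Matrix.mul_assoc, hBP, Matrix.mul_zero]
  rw [← conjTranspose_eq_transpose_of_trivial, conjTranspose_mul_self_eq_zero] at hWP
  rw [← sub_eq_zero, ← neg_eq_zero, neg_sub, ← hWP]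
  simp only [P, Matrix.mul_sub, Matrix.mul_one, Matrix.mul_assoc]

theorem leftSingularVectors_transpose_mul_self :
    (leftSingularVectors W)ᵀ * leftSingularVectors W = 1 := by
  set D := diagonal fun i : SingularIndex W => (singularValue W i)⁻¹
  calc (leftSingularVectors W)ᵀ * leftSingularVectors W
      = D * ((rightSingularVectors W)ᵀ * (Wᵀ * W) * rightSingularVectors W) * D := by
        simp only [leftSingularVectors, D, transpose_mul, diagonal_transpose, Matrix.mul_assoc]
    _ = 1 := by
        rw [transpose_mul_transpose_mul_self_mul_rightSingularVectors, diagonal_mul_diagonal,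
          diagonal_mul_diagonal, ← diagonal_one]
        congr
        ext i
        field_simp [singularValue_ne_zero W i]

theorem eq_leftSingularVectors_mul_diagonal_mul_transpose :
    W = leftSingularVectors W * diagonal (fun i : SingularIndex W => singularValue W i) *
      (rightSingularVectors W)ᵀ := by
  have hD : (diagonal fun i : SingularIndex W => (singularValue W i)⁻¹) *
      diagonal (fun i : SingularIndex W => singularValue W i) = 1 := by
    rw [diagonal_mul_diagonal, ← diagonal_one]
    congr
    ext i
    exact inv_mul_cancel₀ (singularValue_ne_zero W i)
  simp only [leftSingularVectors, Matrix.mul_assoc]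
  rw [← Matrix.mul_assoc (diagonal _), hD, Matrix.one_mul, ← Matrix.mul_assoc,
    mul_rightSingularVectors_mul_transpose]

end SingularValueDecomposition

end Matrix

theorem frobSq_eq_trace {n d : ℕ} (M : Matrix (Fin n) (Fin d) ℝ) : frobSq M = trace (Mᵀ * M) := by
  rw [frobSq, Finset.sum_comm]
  simp only [trace, diag, mul_apply, transpose_apply, sq]

theorem traceNorm_eq_sum_singularValue {n m : ℕ} (W : Matrix (Fin n) (Fin m) ℝ) :
    traceNorm W = ∑ i : W.SingularIndex, W.singularValue i := by
  have hzero : ∑ i : {i // ¬(isHermitian_conjTranspose_mul_self W).eigenvalues i ≠ 0},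
      W.singularValue i = 0 :=
    Fintype.sum_eq_zero _ fun i => by rw [singularValue, not_not.mp i.2, Real.sqrt_zero]
  change ∑ i, W.singularValue i = _
  rw [← Fintype.sum_subtype_add_sum_subtype
    (fun i => (isHermitian_conjTranspose_mul_self W).eigenvalues i ≠ 0), hzero, add_zero]

/-- Variational characterization of the trace norm: for W of rank at most k,
‖W‖_* = min { ½(‖U‖_F² + ‖V‖_F²) : W = UVᵀ, U ∈ ℝ^{n×k}, V ∈ ℝ^{m×k} },
and the minimum is attained. -/
theorem traceNorm_eq_min_factorization {n m k : ℕ}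
    (W : Matrix (Fin n) (Fin m) ℝ) (hrank : W.rank ≤ k) :
    IsLeast {c : ℝ | ∃ (U : Matrix (Fin n) (Fin k) ℝ) (V : Matrix (Fin m) (Fin k) ℝ),
        W = U * Vᵀ ∧ c = (1/2) * (frobSq U + frobSq V)} (traceNorm W) := by
  have hA := W.leftSingularVectors_transpose_mul_self
  have hB := W.rightSingularVectors_transpose_mul_self
  have hW := W.eq_leftSingularVectors_mul_diagonal_mul_transpose
  rw [traceNorm_eq_sum_singularValue]
  constructor
  · obtain ⟨e⟩ : Nonempty (W.SingularIndex ↪ Fin k) :=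
      Function.Embedding.nonempty_of_card_le (by rwa [card_singularIndex, Fintype.card_fin])
    obtain ⟨U, V, hUV, hU, hV⟩ :=
      exists_eq_mul_transpose_of_embedding hA hB hW (fun _ => Real.sqrt_nonneg _) e
    exact ⟨U, V, hUV, by rw [frobSq_eq_trace, frobSq_eq_trace, hU, hV]; ring⟩
  · rintro _ ⟨U, V, hUV, rfl⟩
    rw [frobSq_eq_trace, frobSq_eq_trace]
    linarith [sum_le_of_eq_mul_transpose hA hB hW hUV]
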